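/- Let (A[Λ]) be a weak tower of complements for a ring R ⊆ K. Then for every x ∈ R, the support supp(x) := {γ ∈ G : a_γ(x) ≠ 0} is a well-ordered subset of G, and min(supp x) = v(x); hence the map x ↦ Σ_γ a_γ(x) t^γ is an injective valuation-preserving homomorphism of additive groups from R into the group of generalized power series k((G)). -/

import Mathlib

set_option autoImplicit false

universe u v

/-- A Dedekind cut of a linearly ordered abelian group, represented by its left part
(`L = Λ^L`); the right part is the complement of `L`.  The cuts `-∞` (`L = ∅`) and
`+∞` (`L = G`) are included. -/
structure Cut (G : Type u) [AddCommGroup G] [LinearOrder G] [IsOrderedAddMonoid G] : Type u where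
  L : Set G
  lower : ∀ ⦃x y : G⦄, y ∈ L → x ≤ y → x ∈ L

namespace Cut

variable {G : Type u} [AddCommGroup G] [LinearOrder G] [IsOrderedAddMonoid G]

/-- Cuts are ordered by inclusion of left parts. -/
instance : PartialOrder (Cut G) where
  le Λ Γ := Λ.L ⊆ Γ.L
  le_refl _ := subset_rfl
  le_trans _ _ _ h h' := fun x hx => h' (h hx)
  le_antisymm := by
    rintro ⟨L₁, h₁⟩ ⟨L₂, h₂⟩ h h'
    simpa using Set.Subset.antisymm h h'

/-- `γ⁻`, the cut with left part `(-∞, γ)`. -/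
def lcut (γ : G) : Cut G := ⟨{x | x < γ}, fun _ _ hy hxy => lt_of_le_of_lt hxy hy⟩

/-- `γ⁺`, the cut with left part `(-∞, γ]`. -/
def rcut (γ : G) : Cut G := ⟨{x | x ≤ γ}, fun _ _ hy hxy => le_trans hxy hy⟩

/-- The left sum of cuts: the smallest cut whose left part contains all `λ + γ`
with `λ < Λ`, `γ < Γ`. -/
instance : Add (Cut G) :=
  ⟨fun Λ Γ => ⟨{x | ∃ l ∈ Λ.L, ∃ g ∈ Γ.L, x ≤ l + g}, by
    rintro x y ⟨l, hl, g, hg, hy⟩ hxy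
    exact ⟨l, hl, g, hg, hxy.trans hy⟩⟩⟩

/-- The right sum of cuts: the largest cut whose right part contains all `λ + γ`
with `λ > Λ`, `γ > Γ`. -/
def addR (Λ Γ : Cut G) : Cut G :=
  ⟨{x | ∀ l ∉ Λ.L, ∀ g ∉ Γ.L, x < l + g}, by
    intro x y hy hxy l hl g hg
    exact lt_of_le_of_lt hxy (hy l hl g hg)⟩

/-- The right difference of cuts: the largest cut whose right part contains all
`λ − γ` with `λ > Λ`, `γ < Γ`. -/
def sub (Λ Γ : Cut G) : Cut G :=
  ⟨{x | ∀ l ∉ Λ.L, ∀ g ∈ Γ.L, x < l - g}, by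
    intro x y hy hxy l hl g hg
    exact lt_of_le_of_lt hxy (hy l hl g hg)⟩

/-- Translation `γ + Λ` of a cut by a group element, with left part `{γ + λ : λ ∈ Λ^L}`. -/
def transl (γ : G) (Λ : Cut G) : Cut G :=
  ⟨(fun x => γ + x) '' Λ.L, by
    rintro x y ⟨l, hl, rfl⟩ hxy
    exact ⟨x - γ, Λ.lower hl (sub_le_iff_le_add'.mpr hxy), by show γ + (x - γ) = x; rw [add_comm, sub_add_cancel]⟩⟩

/-- Negation of a cut: `-Λ = (-Λ^R, -Λ^L)`. -/
def neg (Λ : Cut G) : Cut G :=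
  ⟨{x | -x ∉ Λ.L}, by
    intro x y hy hxy hx
    exact hy (Λ.lower hx (neg_le_neg hxy))⟩

/-- The `n`-fold left sum `Λ + Γ + ⋯ + Γ` (`Γ` added `n` times). -/
def addn (Λ Γ : Cut G) : ℕ → Cut G
  | 0 => Λ
  | n + 1 => addn Λ Γ n + Γ

/-- The `n`-fold right difference `Λ − Γ − ⋯ − Γ` (`Γ` subtracted `n` times). -/
def subn (Λ Γ : Cut G) : ℕ → Cut G
  | 0 => Λ
  | n + 1 => (subn Λ Γ n).sub Γ

/-- `nΓ = Γ + ⋯ + Γ` (`n` times); by convention `0 • Γ = 0⁺`, the neutral element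
of the left sum. -/
def nsmul : ℕ → Cut G → Cut G
  | 0, _ => rcut 0
  | 1, Γ => Γ
  | n + 2, Γ => nsmul (n + 1) Γ + Γ

/-- `ℤ`-multiples of a cut: `(-n)Γ := -(nΓ)`. -/
def zsmul (n : ℤ) (Γ : Cut G) : Cut G :=
  if 0 ≤ n then nsmul n.toNat Γ else (nsmul (-n).toNat Γ).neg

/-- `ℤΓ := sup {nΓ : n ∈ ℤ}`. -/
def zmul (Γ : Cut G) : Cut G :=
  ⟨⋃ n : ℤ, (zsmul n Γ).L, by
    intro x y hy hxy
    rcases Set.mem_iUnion.1 hy with ⟨n, hn⟩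
    exact Set.mem_iUnion.2 ⟨n, (zsmul n Γ).lower hn hxy⟩⟩

/-- `S⁺`: the smallest cut whose left part contains the set `S`. -/
def ofSet (s : Set G) : Cut G :=
  ⟨{x | ∃ γ ∈ s, x ≤ γ}, by
    rintro x y ⟨γ, hγ, hy⟩ hxy
    exact ⟨γ, hγ, hxy.trans hy⟩⟩

/-- The supremum (maximum) of two cuts. -/
def max (Λ Γ : Cut G) : Cut G :=
  ⟨Λ.L ∪ Γ.L, by
    rintro x y (hy | hy) hxy
    · exact Or.inl (Λ.lower hy hxy)
    · exact Or.inr (Γ.lower hy hxy)⟩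

/-- The infimum of a set of cuts. -/
def inf (s : Set (Cut G)) : Cut G :=
  ⟨{x | ∀ Λ ∈ s, x ∈ Λ.L}, by
    intro x y hy hxy Λ hΛ
    exact Λ.lower (hy Λ hΛ) hxy⟩

end Cut

/-- A valued field `K` (of equal characteristic) with value group `G`, a value group
section `t`, and an embedded residue field `k ⊆ K` (the residue field section is the
inclusion). The valuation is written additively, with `v 0 = ⊤`. -/
structure VData (K : Type u) (G : Type v) [Field K] [AddCommGroup G] [LinearOrder G] [IsOrderedAddMonoid G] where
  v : K → WithTop G
  k : Subfield K
  t : G → K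
  v_eq_top : ∀ x : K, v x = ⊤ ↔ x = 0
  v_mul : ∀ x y : K, v (x * y) = v x + v y
  v_sub : ∀ x y : K, min (v x) (v y) ≤ v (x - y)
  v_surj : ∀ γ : G, ∃ x : K, v x = (γ : WithTop G)
  v_t : ∀ γ : G, v (t γ) = (γ : WithTop G)
  t_neg : ∀ γ : G, t (-γ) = (t γ)⁻¹
  v_k : ∀ c ∈ k, c ≠ 0 → v c = (0 : WithTop G)
  k_res : ∀ x : K, v x = (0 : WithTop G) → ∃ c ∈ k, (0 : WithTop G) < v (x - c)

namespace VData

variable {K : Type u} {G : Type v} [Field K] [AddCommGroup G] [LinearOrder G] [IsOrderedAddMonoid G]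

/-- `O[Λ] = {x ∈ K : v(x) > Λ}`, the (possibly fractional) ideal of the valuation
ring associated with the cut `Λ`. -/
def Oc (S : VData K G) (Λ : Cut G) : Set K :=
  {x | ∀ γ : G, S.v x = (γ : WithTop G) → γ ∉ Λ.L}

/-- `O_R[Λ] = {x ∈ R : v(x) > Λ}`, for a subring `R` of `K`. -/
def OcR (S : VData K G) (R : Subring K) (Λ : Cut G) : Set K :=
  {x | x ∈ R ∧ ∀ γ : G, S.v x = (γ : WithTop G) → γ ∉ Λ.L}

end VData

/-- Axioms CA–CD of a (weak) tower of complements for the valued field `K`: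
each `A[Λ]` is a `k`-subspace of `K` (CA), `A[Λ] ⊕ O[Λ] = K` (CB),
`t(γ)·k ⊆ A[γ⁺]` (CC), and `Γ ≤ Λ ↔ A[Γ] ⊆ A[Λ]` (CD). -/
structure TowerBase {K : Type u} {G : Type v} [Field K] [AddCommGroup G] [LinearOrder G] [IsOrderedAddMonoid G]
    (S : VData K G) where
  A : Cut G → Set K
  zero_mem : ∀ Λ : Cut G, (0 : K) ∈ A Λ
  add_mem : ∀ Λ : Cut G, ∀ x ∈ A Λ, ∀ y ∈ A Λ, x + y ∈ A Λ
  smul_mem : ∀ Λ : Cut G, ∀ c ∈ S.k, ∀ x ∈ A Λ, c * x ∈ A Λ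
  disj : ∀ Λ : Cut G, ∀ x ∈ A Λ, x ∈ S.Oc Λ → x = 0
  spans : ∀ Λ : Cut G, ∀ x : K, ∃ a ∈ A Λ, ∃ o ∈ S.Oc Λ, x = a + o
  sec_mem : ∀ γ : G, ∀ c ∈ S.k, c * S.t γ ∈ A (Cut.rcut γ)
  mono : ∀ Γ Λ : Cut G, Γ ≤ Λ ↔ A Γ ⊆ A Λ

/-- A weak tower of complements: CA–CD together with CF (`A[γ+Λ] = t(γ)·A[Λ]`). -/
structure WeakTower {K : Type u} {G : Type v} [Field K] [AddCommGroup G] [LinearOrder G] [IsOrderedAddMonoid G]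
    (S : VData K G) extends TowerBase S where
  transl_eq : ∀ (γ : G) (Λ : Cut G),
    A (Cut.transl γ Λ) = (fun x => S.t γ * x) '' A Λ

/-- A tower of complements: CA–CD together with the multiplicativity axiom CE
(`A[Λ]·A[Γ] ⊆ A[Λ+Γ]`). -/
structure Tower {K : Type u} {G : Type v} [Field K] [AddCommGroup G] [LinearOrder G] [IsOrderedAddMonoid G]
    (S : VData K G) extends TowerBase S where
  mul_mem : ∀ Λ Γ : Cut G, ∀ x ∈ A Λ, ∀ y ∈ A Γ, x * y ∈ A (Λ + Γ)

/-- Axioms CA–CD of a (weak) tower of complements for a subring `R` of `K`. -/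
structure RTowerBase {K : Type u} {G : Type v} [Field K] [AddCommGroup G] [LinearOrder G] [IsOrderedAddMonoid G]
    (S : VData K G) (R : Subring K) where
  A : Cut G → Set K
  subset_R : ∀ Λ : Cut G, A Λ ⊆ (R : Set K)
  zero_mem : ∀ Λ : Cut G, (0 : K) ∈ A Λ
  add_mem : ∀ Λ : Cut G, ∀ x ∈ A Λ, ∀ y ∈ A Λ, x + y ∈ A Λ
  smul_mem : ∀ Λ : Cut G, ∀ c ∈ S.k, ∀ x ∈ A Λ, c * x ∈ A Λ
  disj : ∀ Λ : Cut G, ∀ x ∈ A Λ, x ∈ S.OcR R Λ → x = 0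
  spans : ∀ Λ : Cut G, ∀ x ∈ R, ∃ a ∈ A Λ, ∃ o ∈ S.OcR R Λ, x = a + o
  sec_mem : ∀ γ : G, ∀ c ∈ S.k, c * S.t γ ∈ A (Cut.rcut γ)
  mono : ∀ Γ Λ : Cut G, Γ ≤ Λ ↔ A Γ ⊆ A Λ

/-- A weak tower of complements for a subring `R` of `K`: CA–CD together with CF. -/
structure RWeakTower {K : Type u} {G : Type v} [Field K] [AddCommGroup G] [LinearOrder G] [IsOrderedAddMonoid G]
    (S : VData K G) (R : Subring K) extends RTowerBase S R where
  transl_eq : ∀ (γ : G) (Λ : Cut G),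
    A (Cut.transl γ Λ) = (fun x => S.t γ * x) '' A Λ

namespace RTowerBase

variable {K : Type u} {G : Type v} [Field K] [AddCommGroup G] [LinearOrder G] [IsOrderedAddMonoid G]
  {S : VData K G} {R : Subring K}

/-- The support of `x ∈ R` with respect to a (weak) tower of complements:
`γ ∈ supp x` iff the coefficient `a_γ(x)` in the decomposition
`x = x₁ + a_γ(x) t(γ) + x₃` (with `x₁ ∈ A[γ⁻]`, `v(x₃) > γ`) is nonzero, i.e.
iff `x ∉ A[γ⁻] + O[γ⁺]`. -/
def supp (T : RTowerBase S R) (x : K) : Set G :=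
  {γ | ¬ ∃ a ∈ T.A (Cut.lcut γ), ∃ o ∈ S.OcR R (Cut.rcut γ), x = a + o}

/-- `μ(x) := (supp x)⁺`, the smallest cut whose left part contains the support. -/
def mu (T : RTowerBase S R) (x : K) : Cut G :=
  Cut.ofSet (T.supp x)

end RTowerBase

namespace TowerBase

variable {K : Type u} {G : Type v} [Field K] [AddCommGroup G] [LinearOrder G] [IsOrderedAddMonoid G]
  {S : VData K G}

/-- `μ(x) := inf {Λ : x ∈ A[Λ]}`. -/
def muInf (T : TowerBase S) (x : K) : Cut G :=
  Cut.inf {Λ | x ∈ T.A Λ}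

end TowerBase

namespace RTowerBase

variable {K : Type u} {G : Type v} [Field K] [AddCommGroup G] [LinearOrder G] [IsOrderedAddMonoid G]
  {S : VData K G} {R : Subring K}

/-- `μ(x) := inf {Λ : x ∈ A[Λ]}`. -/
def muInf (T : RTowerBase S R) (x : K) : Cut G :=
  Cut.inf {Λ | x ∈ T.A Λ}

end RTowerBase


/-! The coefficient `a_γ(x)` comes from splitting `x = a + o` along `A[γ⁻] ⊕ O[γ⁻]` and peeling
the residue of `o · t(-γ)` off `o`; it is unique because `A[γ⁺] ∩ O[γ⁺] = 0` and
`A[γ⁻] ∩ O[γ⁻] = 0`. The latter also shows that `v(x)` lies in the support, while no `δ < v(x)`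
does since `x ∈ O[δ⁺]`. Finally, if `f` is a strictly decreasing sequence in the support, splitting
`x` along the cut `Λ` just below all of the `f n` shows `x ∈ A[f(m)⁻] + O[f(m)⁺]` for some `m`. -/

namespace Cut

variable {G : Type v} [AddCommGroup G] [LinearOrder G] [IsOrderedAddMonoid G]

theorem lcut_le_rcut (γ : G) : lcut γ ≤ rcut γ := fun _ h => le_of_lt h

/-- `∀ γ : G, w = γ → γ ∉ Λ.L` encodes `w > Λ`, the condition defining `O[Λ]`. -/
theorem above_of_le {Λ : Cut G} {w w' : WithTop G} (hw : ∀ γ : G, w = γ → γ ∉ Λ.L)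
    (h : w ≤ w') : ∀ γ : G, w' = γ → γ ∉ Λ.L := by
  rintro γ rfl hγ
  induction w using WithTop.recTopCoe with
  | top => exact (WithTop.coe_lt_top γ).not_ge h
  | coe β => exact hw β rfl (Λ.lower hγ (WithTop.coe_le_coe.1 h))

end Cut

namespace VData

variable {K : Type u} {G : Type v} [Field K] [AddCommGroup G] [LinearOrder G]
  [IsOrderedAddMonoid G] (S : VData K G) {R : Subring K}

theorem v_zero : S.v 0 = ⊤ := (S.v_eq_top 0).2 rfl

theorem v_ne_top {x : K} (hx : x ≠ 0) : S.v x ≠ ⊤ := fun h => hx ((S.v_eq_top x).1 h)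

theorem t_ne_zero (γ : G) : S.t γ ≠ 0 := by
  intro h
  simpa [h, S.v_zero] using S.v_t γ

theorem v_mul_t {c : K} (hc : c ∈ S.k) (hc0 : c ≠ 0) (γ : G) : S.v (c * S.t γ) = γ := by
  rw [S.v_mul, S.v_k c hc hc0, S.v_t, zero_add]

variable {S}

theorem mem_OcR_rcut_iff {x : K} {γ : G} :
    x ∈ S.OcR R (Cut.rcut γ) ↔ x ∈ R ∧ (γ : WithTop G) < S.v x := by
  refine and_congr_right fun _ => ?_
  induction S.v x using WithTop.recTopCoe with
  | top => simp
  | coe β => simp [Cut.rcut]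

theorem mem_OcR_lcut_iff {x : K} {γ : G} :
    x ∈ S.OcR R (Cut.lcut γ) ↔ x ∈ R ∧ (γ : WithTop G) ≤ S.v x := by
  refine and_congr_right fun _ => ?_
  induction S.v x using WithTop.recTopCoe with
  | top => simp
  | coe β => simp [Cut.lcut]

theorem zero_mem_OcR (Λ : Cut G) : (0 : K) ∈ S.OcR R Λ :=
  ⟨R.zero_mem, fun γ h => by simp [S.v_zero] at h⟩

theorem sub_mem_OcR {Λ : Cut G} {x y : K} (hx : x ∈ S.OcR R Λ) (hy : y ∈ S.OcR R Λ) :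
    x - y ∈ S.OcR R Λ := by
  refine ⟨R.sub_mem hx.1 hy.1, ?_⟩
  rcases min_choice (S.v x) (S.v y) with h | h
  · exact Cut.above_of_le hx.2 (h ▸ S.v_sub x y)
  · exact Cut.above_of_le hy.2 (h ▸ S.v_sub x y)

theorem add_mem_OcR {Λ : Cut G} {x y : K} (hx : x ∈ S.OcR R Λ) (hy : y ∈ S.OcR R Λ) :
    x + y ∈ S.OcR R Λ := by
  simpa using sub_mem_OcR hx (sub_mem_OcR (zero_mem_OcR Λ) hy)

variable (S)

theorem exists_v_sub_mul_t_gt {o : K} {γ : G} (ho : (γ : WithTop G) ≤ S.v o) :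
    ∃ c : S.k, (γ : WithTop G) < S.v (o - c * S.t γ) := by
  rcases ho.lt_or_eq with hlt | heq
  · exact ⟨0, by simpa using hlt⟩
  have hy : S.v (o * S.t (-γ)) = 0 := by
    rw [S.v_mul, ← heq, S.v_t, ← WithTop.coe_add, add_neg_cancel, WithTop.coe_zero]
  obtain ⟨c, hc, hres⟩ := S.k_res _ hy
  refine ⟨⟨c, hc⟩, ?_⟩
  have hsplit : o - c * S.t γ = (o * S.t (-γ) - c) * S.t γ := by
    rw [sub_mul, S.t_neg, mul_assoc, inv_mul_cancel₀ (S.t_ne_zero γ), mul_one]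
  rw [hsplit, S.v_mul, S.v_t]
  induction hw : S.v (o * S.t (-γ) - c) using WithTop.recTopCoe with
  | top => simp
  | coe ε =>
    rw [hw] at hres
    rw [← WithTop.coe_add, WithTop.coe_lt_coe]
    exact lt_add_of_pos_left γ (WithTop.coe_pos.1 hres)

end VData

namespace RTowerBase

variable {K : Type u} {G : Type v} [Field K] [AddCommGroup G] [LinearOrder G]
  [IsOrderedAddMonoid G] {S : VData K G} {R : Subring K} (B : RTowerBase S R)

theorem sub_mem_A {Λ : Cut G} {x y : K} (hx : x ∈ B.A Λ) (hy : y ∈ B.A Λ) : x - y ∈ B.A Λ := by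
  simpa [sub_eq_add_neg] using B.add_mem Λ x hx _ (B.smul_mem Λ (-1) (S.k.neg_mem S.k.one_mem) y hy)

theorem exists_decomp {x : K} (hx : x ∈ R) (γ : G) :
    ∃ c : S.k, ∃ a ∈ B.A (Cut.lcut γ), ∃ o ∈ S.OcR R (Cut.rcut γ), x = a + c * S.t γ + o := by
  obtain ⟨a, ha, o, ho, rfl⟩ := B.spans (Cut.lcut γ) x hx
  obtain ⟨hoR, hvo⟩ := VData.mem_OcR_lcut_iff.1 ho
  obtain ⟨c, hc⟩ := S.exists_v_sub_mul_t_gt hvo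
  have hct : (c : K) * S.t γ ∈ R := B.subset_R _ (B.sec_mem γ c c.2)
  exact ⟨c, a, ha, o - c * S.t γ, VData.mem_OcR_rcut_iff.2 ⟨R.sub_mem hoR hct, hc⟩, by ring⟩

theorem coeff_eq_of_decomp {γ : G} {c c' : S.k} {a a' o o' : K}
    (ha : a ∈ B.A (Cut.lcut γ)) (ha' : a' ∈ B.A (Cut.lcut γ))
    (ho : o ∈ S.OcR R (Cut.rcut γ)) (ho' : o' ∈ S.OcR R (Cut.rcut γ))
    (h : a + c * S.t γ + o = a' + c' * S.t γ + o') : c = c' := by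
  have hdc : ((c - c' : S.k) : K) * S.t γ ∈ B.A (Cut.rcut γ) := B.sec_mem γ _ (c - c').2
  have hzero : (a - a') + ((c - c' : S.k) : K) * S.t γ = 0 := by
    refine B.disj _ _ (B.add_mem _ _ ((B.mono _ _).1 (Cut.lcut_le_rcut γ) (B.sub_mem_A ha ha')) _ hdc) ?_
    convert VData.sub_mem_OcR ho' ho using 1
    push_cast
    linear_combination h
  by_contra hne
  have hc0 : ((c - c' : S.k) : K) ≠ 0 := by simpa [sub_eq_zero] using hne
  have hA : ((c - c' : S.k) : K) * S.t γ ∈ B.A (Cut.lcut γ) := by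
    convert B.sub_mem_A ha' ha using 1
    linear_combination hzero
  have hO : ((c - c' : S.k) : K) * S.t γ ∈ S.OcR R (Cut.lcut γ) :=
    VData.mem_OcR_lcut_iff.2 ⟨B.subset_R _ hdc, (S.v_mul_t (c - c').2 hc0 γ).ge⟩
  exact mul_ne_zero hc0 (S.t_ne_zero γ) (B.disj _ _ hA hO)

theorem mem_supp_iff_of_decomp {x a o : K} {γ : G} {c : S.k} (ha : a ∈ B.A (Cut.lcut γ))
    (ho : o ∈ S.OcR R (Cut.rcut γ)) (hx : x = a + c * S.t γ + o) : γ ∈ B.supp x ↔ c ≠ 0 := by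
  refine ⟨fun hγ hc => hγ ⟨a, ha, o, ho, by simp [hx, hc]⟩, fun hc ⟨a', ha', o', ho', hx'⟩ => ?_⟩
  exact hc (B.coeff_eq_of_decomp ha ha' ho ho' (by simpa [← hx] using hx'))

theorem v_le_of_mem_supp {x : K} (hx : x ∈ R) {δ : G} (hδ : δ ∈ B.supp x) : S.v x ≤ δ := by
  by_contra h
  exact hδ ⟨0, B.zero_mem _, x, VData.mem_OcR_rcut_iff.2 ⟨hx, not_le.1 h⟩, (zero_add x).symm⟩

theorem mem_supp_of_v_eq {x : K} {γ : G} (hv : S.v x = γ) : γ ∈ B.supp x := by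
  rintro ⟨a, ha, o, ho, rfl⟩
  obtain ⟨hoR, hvo⟩ := VData.mem_OcR_rcut_iff.1 ho
  have hva : (γ : WithTop G) ≤ S.v a := by
    simpa [hv, min_eq_left hvo.le] using S.v_sub (a + o) o
  obtain rfl : a = 0 := B.disj _ a ha (VData.mem_OcR_lcut_iff.2 ⟨B.subset_R _ ha, hva⟩)
  rw [zero_add] at hv
  exact (hv ▸ hvo).false

theorem v_eq_coe_iff_isLeast_supp {x : K} (hx : x ∈ R) (hx0 : x ≠ 0) {γ : G} :
    S.v x = γ ↔ IsLeast (B.supp x) γ := by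
  have isLeast_of_v_eq {γ : G} (hv : S.v x = γ) : IsLeast (B.supp x) γ :=
    ⟨B.mem_supp_of_v_eq hv, fun δ hδ => WithTop.coe_le_coe.1 (hv ▸ B.v_le_of_mem_supp hx hδ)⟩
  obtain ⟨γ₀, hγ₀⟩ := WithTop.ne_top_iff_exists.1 (S.v_ne_top hx0)
  refine ⟨isLeast_of_v_eq, fun hγ => ?_⟩
  rw [← hγ₀, (isLeast_of_v_eq hγ₀.symm).unique hγ]

theorem supp_isWF {x : K} (hx : x ∈ R) : (B.supp x).IsWF := by
  rw [Set.isWF_iff_no_descending_seq]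
  intro f hf hmem
  let Λ : Cut G := ⟨{g | ∀ n, g ≤ f n}, fun _ _ hb hab n => hab.trans (hb n)⟩
  obtain ⟨a, ha, o, ho, rfl⟩ := B.spans Λ x hx
  have hvo : ∃ n, (f n : WithTop G) < S.v o := by
    induction hv : S.v o using WithTop.recTopCoe with
    | top => exact ⟨0, WithTop.coe_lt_top _⟩
    | coe β =>
      obtain ⟨n, hn⟩ : ∃ n, f n < β := by simpa [Λ] using ho.2 β hv
      exact ⟨n + 1, WithTop.coe_lt_coe.2 ((hf n.lt_succ_self).trans hn)⟩
  obtain ⟨m, hm⟩ := hvo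
  have hΛ : Λ ≤ Cut.lcut (f m) := fun g hg => (hg (m + 1)).trans_lt (hf m.lt_succ_self)
  exact hmem m ⟨a, (B.mono _ _).1 hΛ ha, o, VData.mem_OcR_rcut_iff.2 ⟨ho.1, hm⟩, rfl⟩

/-- The coefficient `a_γ(x)`. -/
noncomputable def coeff (x : R) (γ : G) : S.k :=
  (B.exists_decomp x.2 γ).choose

theorem coeff_spec (x : R) (γ : G) :
    ∃ a ∈ B.A (Cut.lcut γ), ∃ o ∈ S.OcR R (Cut.rcut γ),
      (x : K) = a + (B.coeff x γ : K) * S.t γ + o :=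
  (B.exists_decomp x.2 γ).choose_spec

theorem support_coeff (x : R) : Function.support (B.coeff x) = B.supp x := by
  ext γ
  obtain ⟨a, ha, o, ho, hx⟩ := B.coeff_spec x γ
  exact (B.mem_supp_iff_of_decomp ha ho hx).symm

theorem coeff_add (x y : R) (γ : G) : B.coeff (x + y) γ = B.coeff x γ + B.coeff y γ := by
  obtain ⟨a, ha, o, ho, hx⟩ := B.coeff_spec x γ
  obtain ⟨a', ha', o', ho', hy⟩ := B.coeff_spec y γ
  obtain ⟨a'', ha'', o'', ho'', hxy⟩ := B.coeff_spec (x + y) γ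
  refine B.coeff_eq_of_decomp ha'' (B.add_mem _ _ ha _ ha') ho'' (VData.add_mem_OcR ho ho') ?_
  push_cast
  rw [← hxy, Subring.coe_add, hx, hy]
  ring

/-- The expansion `x ↦ Σ_γ a_γ(x) t^γ` into generalized power series. -/
noncomputable def toHahnSeries : R →+ HahnSeries G S.k :=
  AddMonoidHom.mk'
    (fun x => ⟨B.coeff x, by rw [support_coeff]; exact (B.supp_isWF x.2).isPWO⟩)
    fun x y => HahnSeries.ext (funext (B.coeff_add x y))

theorem support_toHahnSeries (x : R) : (B.toHahnSeries x).support = B.supp x :=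
  B.support_coeff x

theorem injective_toHahnSeries : Function.Injective B.toHahnSeries := by
  refine (injective_iff_map_eq_zero _).2 fun x hx => ?_
  by_contra hx0
  have hxK : (x : K) ≠ 0 := by exact_mod_cast hx0
  obtain ⟨γ, hγ⟩ := WithTop.ne_top_iff_exists.1 (S.v_ne_top hxK)
  have hmem := B.mem_supp_of_v_eq hγ.symm
  rw [← support_toHahnSeries, hx, HahnSeries.support_zero] at hmem
  exact hmem

end RTowerBase

theorem supp_wellOrdered_and_power_series_embedding_general {K : Type u} {G : Type v}
    [Field K] [AddCommGroup G] [LinearOrder G] [IsOrderedAddMonoid G]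
    (S : VData K G) (R : Subring K)
    (T : RWeakTower S R) :
    (∀ x : K, x ∈ R → (T.toRTowerBase.supp x).IsWF) ∧
    (∀ x : K, x ∈ R → x ≠ 0 → ∃ γ ∈ T.toRTowerBase.supp x,
      S.v x = (γ : WithTop G) ∧ ∀ δ ∈ T.toRTowerBase.supp x, γ ≤ δ) ∧
    ∃ Φ : R →+ HahnSeries G S.k,
      Function.Injective Φ ∧
      (∀ x : R, (Φ x).support = T.toRTowerBase.supp (x : K)) ∧
      (∀ x : R, ∀ γ : G, ∃ a ∈ T.A (Cut.lcut γ), ∃ o ∈ S.OcR R (Cut.rcut γ),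
        (x : K) = a + ((Φ x).coeff γ : K) * S.t γ + o) ∧
      (∀ x : R, (x : K) ≠ 0 → ∀ γ : G,
        S.v (x : K) = (γ : WithTop G) ↔
          γ ∈ (Φ x).support ∧ ∀ δ ∈ (Φ x).support, γ ≤ δ) := by
  set B := T.toRTowerBase
  refine ⟨fun x hx => B.supp_isWF hx, fun x hx hx0 => ?_, B.toHahnSeries,
    B.injective_toHahnSeries, B.support_toHahnSeries, B.coeff_spec, fun x hx0 γ => ?_⟩
  · obtain ⟨γ, hγ⟩ := WithTop.ne_top_iff_exists.1 (S.v_ne_top hx0)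
    obtain ⟨hmem, hleast⟩ := (B.v_eq_coe_iff_isLeast_supp hx hx0).1 hγ.symm
    exact ⟨γ, hmem, hγ.symm, hleast⟩
  · rw [B.support_toHahnSeries]
    exact B.v_eq_coe_iff_isLeast_supp x.2 hx0

/-- Let `(A[Λ])` be a weak tower of complements for a ring `R ⊆ K`
(containing the valuation ring and the image of `t`).  Then for every `x ∈ R` the
support `supp(x)` is a well-ordered subset of `G` with `min (supp x) = v(x)`; hence
the map `x ↦ Σ_γ a_γ(x) t^γ` is an injective valuation-preserving homomorphism of
additive groups from `R` into the group of generalized power series `k((G))`. -/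
theorem supp_wellOrdered_and_power_series_embedding {K : Type u} {G : Type v}
    [Field K] [AddCommGroup G] [LinearOrder G] [IsOrderedAddMonoid G]
    (S : VData K G) (R : Subring K)
    (hO : ∀ x : K, (0 : WithTop G) ≤ S.v x → x ∈ R)
    (ht : ∀ γ : G, S.t γ ∈ R)
    (T : RWeakTower S R) :
    (∀ x : K, x ∈ R → (T.toRTowerBase.supp x).IsWF) ∧
    (∀ x : K, x ∈ R → x ≠ 0 → ∃ γ ∈ T.toRTowerBase.supp x,
      S.v x = (γ : WithTop G) ∧ ∀ δ ∈ T.toRTowerBase.supp x, γ ≤ δ) ∧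
    ∃ Φ : R →+ HahnSeries G S.k,
      Function.Injective Φ ∧
      (∀ x : R, (Φ x).support = T.toRTowerBase.supp (x : K)) ∧
      (∀ x : R, ∀ γ : G, ∃ a ∈ T.A (Cut.lcut γ), ∃ o ∈ S.OcR R (Cut.rcut γ),
        (x : K) = a + ((Φ x).coeff γ : K) * S.t γ + o) ∧
      (∀ x : R, (x : K) ≠ 0 → ∀ γ : G,
        S.v (x : K) = (γ : WithTop G) ↔
          γ ∈ (Φ x).support ∧ ∀ δ ∈ (Φ x).support, γ ≤ δ) :=
  supp_wellOrdered_and_power_series_embedding_general S R T
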